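/- arXiv:1311.6968 — 2 statements merged into one kernel-verified Lean document; each statement's English description precedes it below -/
import Mathlib

section
/- Let b, b' ∈ 𝓑' and set c_i = max(b'_i − b_i, 0) for each i. Then x_1^{c_1} x_2^{c_2} ⋯ x_n^{c_n} · I_b ⊆ I_{b'}. -/
open MvPolynomial

/-- The complete homogeneous symmetric polynomial of degree `j` in the variables indexed
by the finite set `S`. -/
noncomputable def hset (n : ℕ) (S : Finset (Fin n)) (j : ℕ) : MvPolynomial (Fin n) ℂ :=
  ∑ μ ∈ Finset.univ.filter (fun μ : Sym (Fin n) j => ∀ i ∈ μ, i ∈ S),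
    (μ.val.map MvPolynomial.X).prod

/-- The complete homogeneous symmetric polynomial `h_j(x_1, …, x_k)` of degree `j` in the
first `k` variables (these are the 0-based indices `0, …, k-1`). -/
noncomputable def hfirst (n k j : ℕ) : MvPolynomial (Fin n) ℂ :=
  hset n (Finset.univ.filter (fun i : Fin n => (i : ℕ) < k)) j

/-- The ideal `I_b` generated by `h_{b_1}(x_1), h_{b_2}(x_1,x_2), …, h_{b_n}(x_1,…,x_n)`. -/
noncomputable def Ib {n : ℕ} (b : Fin n → ℕ) : Ideal (MvPolynomial (Fin n) ℂ) :=
  Ideal.span (Set.range fun i : Fin n => hfirst n ((i : ℕ) + 1) (b i))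

/-- `b ∈ 𝓑'`: a sequence of positive integers with `b i ≥ b (i+1) ≥ b i - 1` for all `i`. -/
def Bprime {n : ℕ} (b : Fin n → ℕ) : Prop :=
  (∀ i, 0 < b i) ∧ ∀ (i : ℕ) (h : i + 1 < n),
    b ⟨i + 1, h⟩ ≤ b ⟨i, Nat.lt_of_succ_lt h⟩ ∧
      b ⟨i, Nat.lt_of_succ_lt h⟩ ≤ b ⟨i + 1, h⟩ + 1

/-! Everything rests on the recurrence
`h_{j+1}(x_1, …, x_k) = h_{j+1}(x_1, …, x_{k-1}) + x_k h_j(x_1, …, x_k)`.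
Since `b'_{k-1} ≤ b'_k + 1`, it shows by induction on `k` that `h_j(x_1, …, x_k) ∈ I_{b'}` for all
`j ≥ b'_k`. For the generator `h_{b_k}(x_1, …, x_k)` of `I_b`, the recurrence read as
`x_k^{e+1} h_j(x_1, …, x_k) = x_k^e h_{j+1}(x_1, …, x_k) - x_k^e h_{j+1}(x_1, …, x_{k-1})`
trades each factor `x_k` for one more degree, until the degree reaches `b_k + c_k ≥ b'_k`; the
terms in fewer variables have degree `≥ b_k + 1 ≥ b_{k-1}` and are absorbed by induction on `k`,
using up the factors `x_1^{c_1} ⋯ x_{k-1}^{c_{k-1}}`. -/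

section CompleteHomogeneous

variable {n : ℕ}

lemma hset_empty_succ (j : ℕ) : hset n ∅ (j + 1) = 0 := by
  refine Finset.sum_eq_zero fun μ hμ => ?_
  obtain ⟨i, hi⟩ := μ.exists_mem
  simpa using (Finset.mem_filter.1 hμ).2 i hi

lemma hset_succ_eq_erase_add {S : Finset (Fin n)} {a : Fin n} (ha : a ∈ S) (j : ℕ) :
    hset n S (j + 1) = hset n (S.erase a) (j + 1) + X a * hset n S j := by
  classical
  rw [hset, ← Finset.sum_filter_add_sum_filter_not _ (fun μ => a ∉ μ), Finset.filter_filter,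
    Finset.filter_filter, hset, hset, Finset.mul_sum]
  congr 1
  · refine Finset.sum_congr (Finset.filter_congr fun μ _ => ?_) fun _ _ => rfl
    simp only [Finset.mem_erase]
    exact ⟨fun ⟨hS, haμ⟩ i hi => ⟨fun h => haμ (h ▸ hi), hS i hi⟩,
      fun h => ⟨fun i hi => (h i hi).2, fun haμ => (h a haμ).1 rfl⟩⟩
  · symm
    refine Finset.sum_bij (fun ν _ => a ::ₛ ν) (fun ν hν => ?_)
      (fun ν₁ _ ν₂ _ h => (Sym.cons_inj_right a ν₁ ν₂).1 h) (fun μ hμ => ?_) fun ν _ => ?_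
    · simp only [Finset.mem_filter, Finset.mem_univ, true_and, not_not, Sym.mem_cons] at hν ⊢
      exact ⟨fun i hi => hi.elim (· ▸ ha) (hν i), Or.inl trivial⟩
    · simp only [Finset.mem_filter, Finset.mem_univ, true_and, not_not] at hμ
      exact ⟨μ.erase a hμ.2, Finset.mem_filter.2 ⟨Finset.mem_univ _,
        fun i hi => hμ.1 i (Multiset.mem_of_mem_erase hi)⟩, Sym.cons_erase hμ.2⟩
    · simp [Sym.val_eq_coe, Sym.coe_cons]

lemma hfirst_zero_succ (j : ℕ) : hfirst n 0 (j + 1) = 0 := by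
  simpa [hfirst] using hset_empty_succ j

lemma hfirst_succ_succ {k : ℕ} (hk : k < n) (j : ℕ) :
    hfirst n (k + 1) (j + 1) = hfirst n k (j + 1) + X ⟨k, hk⟩ * hfirst n (k + 1) j := by
  have herase : (Finset.univ.filter fun i : Fin n => (i : ℕ) < k + 1).erase ⟨k, hk⟩ =
      Finset.univ.filter fun i : Fin n => (i : ℕ) < k := by
    ext i
    simp only [Finset.mem_erase, Finset.mem_filter, Finset.mem_univ, true_and, ne_eq, Fin.ext_iff]
    omega
  rw [hfirst, hset_succ_eq_erase_add (a := ⟨k, hk⟩) (by simp), herase, hfirst, hfirst]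

end CompleteHomogeneous

section IdealMembership

variable {n : ℕ}

lemma Finset.prod_filter_val_lt_succ {M : Type*} [CommMonoid M] (f : Fin n → M) {k : ℕ}
    (hk : k < n) :
    ∏ i : Fin n with i.val < k + 1, f i = f ⟨k, hk⟩ * ∏ i : Fin n with i.val < k, f i := by
  have hinsert : (Finset.univ.filter fun i : Fin n => (i : ℕ) < k + 1) =
      insert ⟨k, hk⟩ (Finset.univ.filter fun i : Fin n => (i : ℕ) < k) := by
    ext i
    simp only [Finset.mem_insert, Finset.mem_filter, Finset.mem_univ, true_and, Fin.ext_iff]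
    omega
  rw [hinsert, Finset.prod_insert (by simp)]

variable {b b' : Fin n → ℕ}

lemma hfirst_mem_Ib_of_le (hb : ∀ (i : ℕ) (h : i + 1 < n), b ⟨i, by omega⟩ ≤ b ⟨i + 1, h⟩ + 1)
    (k : ℕ) (hk : k < n) {j : ℕ} (hj : b ⟨k, hk⟩ ≤ j) : hfirst n (k + 1) j ∈ Ib b := by
  induction k using Nat.strong_induction_on generalizing j with
  | _ k ih =>
  induction j, hj using Nat.le_induction with
  | base => exact Ideal.subset_span ⟨⟨k, hk⟩, rfl⟩
  | succ j hj ihj =>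
    rw [hfirst_succ_succ hk]
    refine Ideal.add_mem _ ?_ (Ideal.mul_mem_left _ _ ihj)
    cases k with
    | zero => simp [hfirst_zero_succ]
    | succ k => exact ih k k.lt_succ_self (by omega) (by have := hb k hk; omega)

lemma prod_mul_hfirst_mem_Ib (hb : ∀ (i : ℕ) (h : i + 1 < n), b ⟨i, by omega⟩ ≤ b ⟨i + 1, h⟩ + 1)
    (hb' : ∀ (i : ℕ) (h : i + 1 < n), b' ⟨i, by omega⟩ ≤ b' ⟨i + 1, h⟩ + 1)
    (c : Fin n → ℕ) (hc : ∀ i, b' i ≤ b i + c i) (k : ℕ) (hk : k < n) {j : ℕ}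
    (hj : b ⟨k, hk⟩ ≤ j) :
    (∏ i : Fin n with i.val < k + 1, X i ^ c i) * hfirst n (k + 1) j ∈ Ib b' := by
  induction k using Nat.strong_induction_on generalizing j with
  | _ k ih =>
  set P := ∏ i : Fin n with i.val < k, X (R := ℂ) i ^ c i
  have hprev : ∀ j, b ⟨k, hk⟩ ≤ j → P * hfirst n k (j + 1) ∈ Ib b' := by
    intro j hj
    cases k with
    | zero => simp [hfirst_zero_succ]
    | succ k => exact ih k k.lt_succ_self (by omega) (by have := hb k hk; omega)
  have hpow : ∀ e j, b ⟨k, hk⟩ ≤ j → b' ⟨k, hk⟩ ≤ j + e →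
      P * (X ⟨k, hk⟩ ^ e * hfirst n (k + 1) j) ∈ Ib b' := by
    intro e
    induction e with
    | zero =>
      intro j _ hj'
      simpa using Ideal.mul_mem_left _ P (hfirst_mem_Ib_of_le hb' k hk hj')
    | succ e ihe =>
      intro j hj hj'
      have hsplit : X ⟨k, hk⟩ ^ (e + 1) * hfirst n (k + 1) j =
          X ⟨k, hk⟩ ^ e * hfirst n (k + 1) (j + 1) - X ⟨k, hk⟩ ^ e * hfirst n k (j + 1) := by
        rw [hfirst_succ_succ hk]
        ring
      rw [hsplit, mul_sub, mul_left_comm P (X ⟨k, hk⟩ ^ e) (hfirst n k (j + 1))]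
      exact Ideal.sub_mem _ (ihe (j + 1) (by omega) (by omega))
        (Ideal.mul_mem_left _ _ (hprev j hj))
  rw [Finset.prod_filter_val_lt_succ _ hk, mul_right_comm, mul_comm _ P]
  exact hpow _ j hj (by have := hc ⟨k, hk⟩; omega)

end IdealMembership

/-- For `b, b' ∈ 𝓑'` and `c_i = max(b'_i − b_i, 0)` (which is the truncated subtraction
`b' i - b i` on `ℕ`), one has `x_1^{c_1} ⋯ x_n^{c_n} · I_b ⊆ I_{b'}`. -/
theorem stmt7 {n : ℕ} (b b' : Fin n → ℕ) (hb : Bprime b) (hb' : Bprime b') :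
    ∀ p ∈ Ib b, (∏ i, X i ^ (b' i - b i)) * p ∈ Ib b' := by
  suffices h : (∏ i, X i ^ (b' i - b i)) ∈
      (Ib b').colon (Set.range fun k : Fin n => hfirst n (k + 1) (b k)) by
    rw [← Ideal.colon_span] at h
    exact Submodule.mem_colon.1 h
  refine Submodule.mem_colon.2 ?_
  rintro _ ⟨k, rfl⟩
  rw [smul_eq_mul,
    ← Finset.prod_filter_mul_prod_filter_not Finset.univ fun i : Fin n => i.val < k.val + 1,
    mul_right_comm]
  exact Ideal.mul_mem_right _ _ (prod_mul_hfirst_mem_Ib (fun i h => (hb.2 i h).2)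
    (fun i h => (hb'.2 i h).2) _ (fun i => by omega) k k.2 le_rfl)
end

section
/- Let a = (a_1,…,a_n) be any sequence of positive integers (not necessarily monotone). Then the quotient ℂ[x_1,…,x_n]/(h_{a_1}(x_1), h_{a_2}(x_1,x_2), …, h_{a_n}(x_1,…,x_n)) has ℂ-dimension a_1 a_2 ⋯ a_n, and the classes of the monomials x_1^{j_1} ⋯ x_n^{j_n} with 0 ≤ j_i < a_i form a ℂ-basis. -/
open MvPolynomial

/-
Splitting off the last variable identifies `ℂ[x₁,…,xₙ₊₁] ⧸ I_a` with `(ℂ[x₁,…,xₙ] ⧸ I_a')[X] ⧸ (f)`,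
where `a'` drops the last entry and `f` is `h_{aₙ₊₁}(x₁,…,xₙ₊₁)` viewed as a polynomial in
`X = xₙ₊₁`: the other generators only involve `x₁,…,xₙ`. The recursion
`h_{j+1}(x, y) = y h_j(x, y) + h_{j+1}(x)` shows that `f` is monic of degree `aₙ₊₁`, so the
quotient is free over `ℂ[x₁,…,xₙ] ⧸ I_a'` with basis `1, X, …, X^{aₙ₊₁-1}`. By induction the
monomials with exponents `jᵢ < aᵢ` form a `ℂ`-basis.
-/

namespace Polynomial
variable {A : Type*} [CommRing A]

theorem ker_adjoinRootMk_comp_mapRingHom (I : Ideal A) (P : A[X]) :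
    RingHom.ker ((AdjoinRoot.mk (P.map (Ideal.Quotient.mk I))).comp
      (mapRingHom (Ideal.Quotient.mk I))) = I.map C ⊔ Ideal.span {P} := by
  have hsurj : Function.Surjective (mapRingHom (Ideal.Quotient.mk I)) :=
    map_surjective _ Ideal.Quotient.mk_surjective
  have hker (f : (A ⧸ I)[X]) : RingHom.ker (AdjoinRoot.mk f) = Ideal.span {f} := by
    ext; exact AdjoinRoot.mk_eq_zero.trans Ideal.mem_span_singleton.symm
  rw [← RingHom.comap_ker, hker, ← coe_mapRingHom, ← Set.image_singleton, ← Ideal.map_span,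
    Ideal.comap_map_of_surjective _ hsurj, ← RingHom.ker_eq_comap_bot, ker_mapRingHom,
    Ideal.mk_ker, sup_comm]

variable {K : Type*} [CommRing K] [Algebra K A]

theorem exists_basis_quotient_sup_span_monic {ι : Type*} {I : Ideal A} [Nontrivial (A ⧸ I)]
    (b : Module.Basis ι K (A ⧸ I)) (v : ι → A) (hv : ∀ i, b i = Ideal.Quotient.mk I (v i))
    {P : A[X]} (hP : P.Monic) :
    ∃ B : Module.Basis (Fin P.natDegree × ι) K (A[X] ⧸ (I.map C ⊔ Ideal.span {P})),
      ∀ k i, B (k, i) = Ideal.Quotient.mk _ (C (v i) * X ^ (k : ℕ)) := by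
  set f := P.map (Ideal.Quotient.mk I)
  have hf : f.Monic := hP.map _
  let φ : A[X] →ₐ[K] AdjoinRoot f :=
    (Ideal.Quotient.mkₐ K _).comp (mapAlgHom (Ideal.Quotient.mkₐ K I))
  have hφ_apply (p : A[X]) : φ p = AdjoinRoot.mk f (p.map (Ideal.Quotient.mk I)) := rfl
  have hφ : Function.Surjective φ :=
    (AdjoinRoot.mk_surjective).comp (map_surjective _ Ideal.Quotient.mk_surjective)
  have hker : RingHom.ker φ = I.map C ⊔ Ideal.span {P} :=
    ker_adjoinRootMk_comp_mapRingHom I P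
  let e := (Ideal.quotientEquivAlgOfEq K hker.symm).trans
    (Ideal.quotientKerAlgEquivOfSurjective hφ)
  refine ⟨(b.smulTower' ((AdjoinRoot.powerBasis' hf).basis.reindex
    (finCongr (hP.natDegree_map _)))).map e.symm.toLinearEquiv, fun k i => ?_⟩
  rw [Module.Basis.map_apply, AlgEquiv.toLinearEquiv_apply, AlgEquiv.symm_apply_eq]
  simp only [e, AlgEquiv.trans_apply, Ideal.quotientEquivAlgOfEq_mk,
    Ideal.quotientKerAlgEquivOfSurjective_mk, map_mul, map_pow, hφ_apply, map_C, map_X,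
    AdjoinRoot.mk_C, AdjoinRoot.mk_X, Module.Basis.smulTower'_apply, Module.Basis.reindex_apply,
    hv, Algebra.smul_def, PowerBasis.basis_eq_pow, AdjoinRoot.powerBasis'_gen]
  rfl

end Polynomial

namespace MvPolynomial

variable (R : Type*) [CommSemiring R]

noncomputable def lastVarEquiv (n : ℕ) :
    MvPolynomial (Fin (n + 1)) R ≃ₐ[R] Polynomial (MvPolynomial (Fin n) R) :=
  (renameEquiv R finSuccEquivLast).trans (optionEquivLeft R (Fin n))

variable {R} {n : ℕ}

theorem optionEquivLeft_rename_some {σ : Type*} (p : MvPolynomial σ R) :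
    optionEquivLeft R σ (rename some p) = Polynomial.C p := by
  have : ((optionEquivLeft R σ).toAlgHom.comp (rename some)) = Polynomial.CAlgHom :=
    algHom_ext fun i => by simp [optionEquivLeft_X_some]
  exact DFunLike.congr_fun this p

theorem lastVarEquiv_rename_castSucc (p : MvPolynomial (Fin n) R) :
    lastVarEquiv R n (rename Fin.castSucc p) = Polynomial.C p := by
  simp [lastVarEquiv, rename_rename, Function.comp_def, finSuccEquivLast_castSucc,
    optionEquivLeft_rename_some]

theorem lastVarEquiv_monomial (g : Fin (n + 1) → ℕ) (r : R) :
    lastVarEquiv R n (monomial (Finsupp.equivFunOnFinite.symm g) r) =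
      Polynomial.C (monomial (Finsupp.equivFunOnFinite.symm fun i => g i.castSucc) r) *
        Polynomial.X ^ g (Fin.last n) := by
  rw [Polynomial.C_mul_X_pow_eq_monomial, lastVarEquiv, AlgEquiv.trans_apply, renameEquiv_apply,
    rename_monomial, optionEquivLeft_monomial]
  congr
  · simp [Finsupp.mapDomain_equiv_apply]
  · ext i
    simp [Finsupp.mapDomain_equiv_apply]

theorem hsymm_option_succ (σ : Type*) [Fintype σ] [DecidableEq σ] (j : ℕ) :
    hsymm (Option σ) R (j + 1) =
      X none * hsymm (Option σ) R j + rename some (hsymm σ R (j + 1)) := by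
  rw [hsymm, ← symOptionSuccEquiv.symm.sum_comp, Fintype.sum_sum_type]
  simp [hsymm, Finset.mul_sum, map_sum, symOptionSuccEquiv, map_multiset_prod, Multiset.map_map,
    Sym.coe_cons]

theorem lastVarEquiv_hsymm (j : ℕ) :
    lastVarEquiv R n (hsymm (Fin (n + 1)) R j) =
      optionEquivLeft R (Fin n) (hsymm (Option (Fin n)) R j) := by
  rw [lastVarEquiv, AlgEquiv.trans_apply, renameEquiv_apply, rename_hsymm]

theorem optionEquivLeft_hsymm_monic_natDegree [Nontrivial R] (σ : Type*) [Fintype σ]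
    [DecidableEq σ] (j : ℕ) : (optionEquivLeft R σ (hsymm (Option σ) R j)).Monic ∧
      (optionEquivLeft R σ (hsymm (Option σ) R j)).natDegree = j := by
  induction j with
  | zero => simp [hsymm_zero]
  | succ j ih =>
    obtain ⟨hmonic, hdeg⟩ := ih
    rw [hsymm_option_succ, map_add, map_mul, optionEquivLeft_X_none, optionEquivLeft_rename_some]
    have hXmul :
        (Polynomial.X * optionEquivLeft R σ (hsymm (Option σ) R j)).natDegree = j + 1 := by
      rw [Polynomial.natDegree_X_mul hmonic.ne_zero, hdeg]
    have hlt : (Polynomial.C (hsymm σ R (j + 1))).degree <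
        (Polynomial.X * optionEquivLeft R σ (hsymm (Option σ) R j)).degree := by
      rw [Polynomial.degree_eq_natDegree (Polynomial.monic_X.mul hmonic).ne_zero, hXmul]
      exact Polynomial.degree_C_le.trans_lt (by exact_mod_cast j.succ_pos)
    exact ⟨(Polynomial.monic_X.mul hmonic).add_of_left hlt,
      (Polynomial.natDegree_add_eq_left_of_degree_lt hlt).trans hXmul⟩

end MvPolynomial

theorem rename_hset {m n : ℕ} (f : Fin n ↪ Fin m) (S : Finset (Fin n)) (j : ℕ) :
    rename f (hset n S j) = hset m (S.map f) j := by
  rw [hset, hset, map_sum]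
  refine Finset.sum_bij (fun s _ => s.map f) (fun s hs => ?_) (fun s _ t _ h =>
    Sym.map_injective f.injective _ h) (fun t ht => ?_) (fun s _ => ?_)
  · simp only [Finset.mem_filter, Finset.mem_univ, true_and, Sym.mem_map, Finset.mem_map] at hs ⊢
    rintro _ ⟨i, hi, rfl⟩
    exact ⟨i, hs i hi, rfl⟩
  · have : CanLift (Fin m) (Fin n) f (· ∈ Set.range f) := ⟨fun _ h => h⟩
    simp only [Finset.mem_filter, Finset.mem_univ, true_and, Finset.mem_map] at ht
    obtain ⟨u, hu⟩ : ∃ u : Multiset (Fin n), u.map f = t :=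
      CanLift.prf (t : Multiset (Fin m)) fun x hx => by
        obtain ⟨i, -, rfl⟩ := ht x hx
        exact ⟨i, rfl⟩
    refine ⟨Sym.mk u (by rw [← Multiset.card_map f, hu, Sym.card_coe]), ?_, Sym.coe_injective hu⟩
    rw [Finset.mem_filter_univ]
    intro i hi
    obtain ⟨i', hi', hfi⟩ :=
      ht (f i) (by rw [← Sym.mem_coe, ← hu]; exact Multiset.mem_map_of_mem f hi)
    rwa [← f.injective hfi]
  · simp [map_multiset_prod, Multiset.map_map]

theorem hfirst_self (n j : ℕ) : hfirst n n j = hsymm (Fin n) ℂ j := by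
  simp [hfirst, hset, hsymm]

theorem rename_castSucc_hfirst {n k : ℕ} (hk : k ≤ n) (j : ℕ) :
    rename Fin.castSucc (hfirst n k j) = hfirst (n + 1) k j := by
  rw [hfirst, ← Fin.coe_castSuccEmb, rename_hset, hfirst]
  congr 1
  ext i
  simp only [Finset.mem_map, Finset.mem_filter_univ, Fin.coe_castSuccEmb]
  constructor
  · rintro ⟨i, hi, rfl⟩
    exact hi
  · intro hi
    exact ⟨⟨i, hi.trans_le hk⟩, hi, rfl⟩

theorem lastVarEquiv_hfirst_of_le {n k : ℕ} (hk : k ≤ n) (j : ℕ) :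
    lastVarEquiv ℂ n (hfirst (n + 1) k j) = Polynomial.C (hfirst n k j) := by
  rw [← rename_castSucc_hfirst hk, lastVarEquiv_rename_castSucc]

theorem lastVarEquiv_hfirst_self_monic_natDegree (n j : ℕ) :
    (lastVarEquiv ℂ n (hfirst (n + 1) (n + 1) j)).Monic ∧
      (lastVarEquiv ℂ n (hfirst (n + 1) (n + 1) j)).natDegree = j := by
  rw [hfirst_self, lastVarEquiv_hsymm]
  exact optionEquivLeft_hsymm_monic_natDegree _ j

theorem map_lastVarEquiv_Ib {n : ℕ} (a : Fin (n + 1) → ℕ) :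
    (Ib a).map (lastVarEquiv ℂ n) = (Ib fun i => a i.castSucc).map Polynomial.C ⊔
      Ideal.span {lastVarEquiv ℂ n (hfirst (n + 1) (n + 1) (a (Fin.last n)))} := by
  rw [Ib, Ideal.map_span, ← Set.range_comp, ← Fin.snoc_init_self (_ ∘ _), Fin.range_snoc,
    Ideal.span_insert, sup_comm, Ib, Ideal.map_span, ← Set.range_comp]
  congr 3
  ext i
  simp [Fin.init, lastVarEquiv_hfirst_of_le i.isLt]

theorem exists_monomial_basis_quotient_Ib {n : ℕ} (a : Fin n → ℕ) (hpos : ∀ i, 0 < a i) :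
    ∃ B : Module.Basis ((i : Fin n) → Fin (a i)) ℂ (MvPolynomial (Fin n) ℂ ⧸ Ib a),
      ∀ j, B j = Ideal.Quotient.mk (Ib a)
        (monomial (Finsupp.equivFunOnFinite.symm fun i => (j i : ℕ)) 1) := by
  induction n with
  | zero =>
    have : Nontrivial (MvPolynomial (Fin 0) ℂ ⧸ Ib a) :=
      Ideal.Quotient.nontrivial_iff.2 (by simp [Ib])
    have hbij : Function.Bijective (Algebra.linearMap ℂ (MvPolynomial (Fin 0) ℂ ⧸ Ib a)) :=
      ⟨(algebraMap ℂ (MvPolynomial (Fin 0) ℂ ⧸ Ib a)).injective,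
        Ideal.Quotient.mk_surjective.comp (C_surjective (Fin 0))⟩
    refine ⟨(Module.Basis.singleton _ ℂ).map (LinearEquiv.ofBijective _ hbij), fun j => ?_⟩
    simp [Subsingleton.elim (Finsupp.equivFunOnFinite.symm _) 0]
  | succ n ih =>
    obtain ⟨b, hb⟩ := ih (fun i => a i.castSucc) fun i => hpos _
    have : Nontrivial (MvPolynomial (Fin n) ℂ ⧸ Ib fun i => a i.castSucc) :=
      nontrivial_of_ne (b fun i => ⟨0, hpos _⟩) 0 (b.ne_zero _)
    obtain ⟨hmonic, hdeg⟩ := lastVarEquiv_hfirst_self_monic_natDegree n (a (Fin.last n))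
    obtain ⟨B, hB⟩ := Polynomial.exists_basis_quotient_sup_span_monic b _ hb hmonic
    obtain ⟨e, he⟩ : ∃ e : (MvPolynomial (Fin (n + 1)) ℂ ⧸ Ib a) ≃ₐ[ℂ] _, ∀ p,
        e (Ideal.Quotient.mk _ p) = Ideal.Quotient.mk _ (lastVarEquiv ℂ n p) :=
      ⟨_, Ideal.quotientEquivAlg_mk _ _ (map_lastVarEquiv_Ib a).symm⟩
    refine ⟨(B.reindex ((Equiv.prodCongr (finCongr hdeg) (Equiv.refl _)).trans
      (Fin.snocEquiv fun i => Fin (a i)))).map e.symm.toLinearEquiv, fun j => ?_⟩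
    rw [Module.Basis.map_apply, Module.Basis.reindex_apply, AlgEquiv.toLinearEquiv_apply,
      AlgEquiv.symm_apply_eq, he, lastVarEquiv_monomial]
    simp only [Equiv.symm_trans_apply, Fin.snocEquiv_symm_apply, Equiv.prodCongr_symm,
      Equiv.prodCongr_apply, hB]
    rfl

/-- For an arbitrary sequence `a` of positive integers (not necessarily monotone), the
quotient `ℂ[x_1,…,x_n]/(h_{a_1}(x_1), …, h_{a_n}(x_1,…,x_n))` has `ℂ`-dimension
`a_1 ⋯ a_n`, with basis the classes of the monomials `x_1^{j_1} ⋯ x_n^{j_n}` with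
`0 ≤ j_i < a_i`. -/
theorem stmt16 {n : ℕ} (a : Fin n → ℕ) (hpos : ∀ i, 0 < a i) :
    Module.finrank ℂ (MvPolynomial (Fin n) ℂ ⧸ Ib a) = ∏ i, a i ∧
    ∃ B : Module.Basis ((i : Fin n) → Fin (a i)) ℂ (MvPolynomial (Fin n) ℂ ⧸ Ib a),
      ∀ j, B j = Ideal.Quotient.mk (Ib a)
        (monomial (Finsupp.equivFunOnFinite.symm fun i => (j i : ℕ)) 1) := by
  obtain ⟨B, hB⟩ := exists_monomial_basis_quotient_Ib a hpos
  refine ⟨?_, B, hB⟩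
  rw [Module.finrank_eq_card_basis B, Fintype.card_pi]
  simp
end
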